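/- arXiv:1506.07248 — 3 statements merged into one kernel-verified Lean document; each statement's English description precedes it below -/
import Mathlib

section
/- Let C_n be a cycle and p ≥ 3. Any packing coloring of the generalized corona C_n ⊙ pK_1 that assigns color 1 to some vertex of the cycle must use at least p+3 colors. -/
open SimpleGraph

/-- A packing `k`-coloring of a graph: colors in `{1,…,k}`, and distinct vertices
with the same color `i` are at distance greater than `i`. -/
def IsPackingColoring {V : Type*} (G : SimpleGraph V) (k : ℕ) (c : V → ℕ) : Prop :=
  (∀ v, 1 ≤ c v ∧ c v ≤ k) ∧
  ∀ u v : V, u ≠ v → c u = c v → (c u : ℕ∞) < G.edist u v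

/-- The packing chromatic number. -/
noncomputable def packingChromaticNumber {V : Type*} (G : SimpleGraph V) : ℕ :=
  sInf {k | ∃ c, IsPackingColoring G k c}

/-- The generalized corona `G ⊙ pK₁`: add `p` pendant neighbors to each vertex. -/
def genCorona {V : Type*} (G : SimpleGraph V) (p : ℕ) : SimpleGraph (V ⊕ V × Fin p) where
  Adj x y :=
    (∃ u v, x = Sum.inl u ∧ y = Sum.inl v ∧ G.Adj u v) ∨
    (∃ u j, x = Sum.inl u ∧ y = Sum.inr (u, j)) ∨
    (∃ u j, x = Sum.inr (u, j) ∧ y = Sum.inl u)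
  symm := by
    refine ⟨?_⟩
    rintro x y (⟨u, v, rfl, rfl, h⟩ | ⟨u, j, rfl, rfl⟩ | ⟨u, j, rfl, rfl⟩)
    · exact Or.inl ⟨v, u, rfl, rfl, h.symm⟩
    · exact Or.inr (Or.inr ⟨u, j, rfl, rfl⟩)
    · exact Or.inr (Or.inl ⟨u, j, rfl, rfl⟩)
  loopless := by
    refine ⟨?_⟩
    rintro x (⟨u, v, rfl, h1, h⟩ | ⟨u, j, rfl, h1⟩ | ⟨u, j, rfl, h1⟩)
    · cases h1; exact G.irrefl h
    · exact absurd h1 (by simp)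
    · exact absurd h1 (by simp)

/-- `A` is an orientation of `G`: each edge gets exactly one direction. -/
def IsOrientation {V : Type*} (G : SimpleGraph V) (A : V → V → Prop) : Prop :=
  (∀ u v, A u v → ¬ A v u) ∧ (∀ u v, G.Adj u v ↔ (A u v ∨ A v u))

/-- Existence of a directed path of length `n` from `u` to `v`. -/
def DPath {V : Type*} (A : V → V → Prop) : ℕ → V → V → Prop
  | 0, u, v => u = v
  | (n+1), u, v => ∃ w, A u w ∧ DPath A n w v

/-- The weak directed distance: length of a shortest directed path joining `u` and `v`
in either direction. -/
noncomputable def wdist {V : Type*} (A : V → V → Prop) (u v : V) : ℕ∞ :=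
  sInf {m : ℕ∞ | ∃ n : ℕ, m = n ∧ (DPath A n u v ∨ DPath A n v u)}

/-- A packing `k`-coloring of a digraph, w.r.t. the weak directed distance. -/
def IsDPackingColoring {V : Type*} (A : V → V → Prop) (k : ℕ) (c : V → ℕ) : Prop :=
  (∀ v, 1 ≤ c v ∧ c v ≤ k) ∧
  ∀ u v : V, u ≠ v → c u = c v → (c u : ℕ∞) < wdist A u v

/-- The packing chromatic number of a digraph. -/
noncomputable def dPackingChromaticNumber {V : Type*} (A : V → V → Prop) : ℕ :=
  sInf {k | ∃ c, IsDPackingColoring A k c}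

/-- A source: no incoming arcs. -/
def IsSource {V : Type*} (A : V → V → Prop) (v : V) : Prop := ∀ u, ¬ A u v

/-- A sink: no outgoing arcs. -/
def IsSink {V : Type*} (A : V → V → Prop) (v : V) : Prop := ∀ u, ¬ A v u

namespace IsPackingColoring

variable {V : Type*} {G : SimpleGraph V} {k : ℕ} {c : V → ℕ} {u v w : V}

theorem two_le_of_adj (hc : IsPackingColoring G k c) (hu : c u = 1) (huv : G.Adj u v) :
    2 ≤ c v := by
  by_contra! hv
  have hv1 : c v = 1 := by have := (hc.1 v).1; omega
  have := hc.2 u v huv.ne (hu.trans hv1.symm)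
  rw [hu, edist_eq_one_iff_adj.mpr huv] at this
  exact this.false

theorem ne_of_adj_of_adj (hc : IsPackingColoring G k c) (huv : G.Adj u v) (huw : G.Adj u w)
    (hvw : v ≠ w) (hv : 2 ≤ c v) : c v ≠ c w := by
  intro hcvw
  have hdist : G.edist v w ≤ 2 :=
    calc G.edist v w ≤ G.edist v u + G.edist u w := SimpleGraph.edist_triangle
      _ = 2 := by
        rw [SimpleGraph.edist_comm, edist_eq_one_iff_adj.mpr huv, edist_eq_one_iff_adj.mpr huw]; rfl
  have hv' : (2 : ℕ∞) ≤ c v := by exact_mod_cast hv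
  exact absurd ((hv'.trans_lt (hc.2 v w hvw hcvw)).trans_le hdist) (lt_irrefl 2)

/-- The neighbours of a vertex of colour `1` carry pairwise distinct colours from `{2,…,k}`. -/
theorem card_add_one_le_of_eq_one (hc : IsPackingColoring G k c) (hu : c u = 1)
    {s : Finset V} (hs : ∀ v ∈ s, G.Adj u v) : s.card + 1 ≤ k := by
  have hcard : s.card ≤ (Finset.Icc 2 k).card := by
    refine Finset.card_le_card_of_injOn c (fun v hv => ?_) (fun v hv w hw hcvw => ?_)
    · exact Finset.mem_Icc.mpr ⟨hc.two_le_of_adj hu (hs v hv), (hc.1 v).2⟩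
    · by_contra hvw
      exact hc.ne_of_adj_of_adj (hs v hv) (hs w hw) hvw (hc.two_le_of_adj hu (hs v hv)) hcvw
  rw [Nat.card_Icc] at hcard
  have hk : 1 ≤ k := hu ▸ (hc.1 u).2
  omega

end IsPackingColoring

section genCorona

variable {V : Type*} (G : SimpleGraph V) (p : ℕ)

theorem genCorona_adj_inl_of_mem_disjSum {u : V} [Fintype (G.neighborSet u)]
    (x : V ⊕ V × Fin p) (hx : x ∈ (G.neighborFinset u).disjSum ({u} ×ˢ Finset.univ)) :
    (genCorona G p).Adj (Sum.inl u) x := by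
  rcases Finset.mem_disjSum.mp hx with ⟨v, hv, rfl⟩ | ⟨⟨u', j⟩, hj, rfl⟩
  · exact Or.inl ⟨u, v, rfl, rfl, (G.mem_neighborFinset u v).mp hv⟩
  · obtain rfl : u' = u := (Finset.mem_product.mp hj).1 |> Finset.mem_singleton.mp
    exact Or.inr (Or.inl ⟨u', j, rfl, rfl⟩)

theorem card_neighborFinset_disjSum {u : V} [Fintype (G.neighborSet u)] :
    ((G.neighborFinset u).disjSum ({u} ×ˢ (Finset.univ : Finset (Fin p)))).card =
      G.degree u + p := by
  simp [Finset.card_disjSum, card_neighborFinset_eq_degree]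

end genCorona

theorem packing_coloring_corona_cycle_color_one_general (n p k : ℕ) (hn : 3 ≤ n)
    (c : Fin n ⊕ Fin n × Fin p → ℕ)
    (hc : IsPackingColoring (genCorona (cycleGraph n) p) k c)
    (i : Fin n) (hci : c (Sum.inl i) = 1) :
    p + 3 ≤ k := by
  obtain ⟨m, rfl⟩ : ∃ m, n = m + 3 := ⟨n - 3, by omega⟩
  have h := hc.card_add_one_le_of_eq_one hci
    (genCorona_adj_inl_of_mem_disjSum (cycleGraph (m + 3)) p)
  rw [card_neighborFinset_disjSum, cycleGraph_degree_three_le] at h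
  omega

theorem packing_coloring_corona_cycle_color_one (n p k : ℕ) (hn : 3 ≤ n) (hp : 3 ≤ p)
    (c : Fin n ⊕ Fin n × Fin p → ℕ)
    (hc : IsPackingColoring (genCorona (cycleGraph n) p) k c)
    (i : Fin n) (hci : c (Sum.inl i) = 1) :
    p + 3 ≤ k :=
  packing_coloring_corona_cycle_color_one_general n p k hn c hc i hci
end

section
/- The packing chromatic number of P_n ⊙ 3K_1 equals 2 if n = 1, 3 if n = 2, 4 if n ∈ {3,4}, 5 if 5 ≤ n ≤ 8, and 6 if n ≥ 9. -/
open SimpleGraph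

/-!
In `G ⊙ pK₁` the distance between two distinct vertices is the distance of their centers in `G`
plus one for each endpoint that is a pendant vertex. So a packing coloring of `P_n ⊙ 3K₁` is a
sequence of colored stars subject only to pairwise conditions depending on the distance of the
stars. The pendant vertices of a center not colored `1` can be recolored `1`, and those of a
center colored `1` carry distinct colors which can be sorted; so every star may be assumed to be
one of `(k - 1) + C(k - 1, 3)` normal stars, and an exhaustive depth-first search over sequences
of normal stars gives the lower bounds. The upper bounds are explicit colorings; for `n ≥ 9` the
coloring is periodic with period `14`, and only pairs of stars at distance at most `6` need to be
checked.
-/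

namespace SimpleGraph

variable {V : Type*} {G : SimpleGraph V}

theorem le_add_edist_of_adj_le_add_one {φ : V → ℕ∞} (hφ : ∀ ⦃x y⦄, G.Adj x y → φ x ≤ φ y + 1)
    (u v : V) : φ u ≤ φ v + G.edist u v := by
  have key : ∀ {x y : V} (w : G.Walk x y), φ x ≤ φ y + w.length := by
    intro x y w
    induction w with
    | nil => simp
    | @cons x y z hxy q ih =>
      calc φ x ≤ φ y + 1 := hφ hxy
        _ ≤ φ z + q.length + 1 := by gcongr
        _ = φ z + (q.cons hxy).length := by rw [Walk.length_cons, Nat.cast_succ, add_assoc]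
  by_cases huv : G.Reachable u v
  · obtain ⟨w, hw⟩ := huv.exists_walk_length_eq_edist
    exact hw ▸ key w
  · simp [edist_eq_top_of_not_reachable huv]

theorem edist_eq_edist_add_one_of_adj_iff {x w y : V} (hx : ∀ z, G.Adj x z ↔ z = w)
    (hxy : x ≠ y) : G.edist x y = G.edist w y + 1 := by
  apply le_antisymm
  · calc G.edist x y ≤ G.edist x w + G.edist w y := G.edist_triangle
      _ = G.edist w y + 1 := by rw [edist_eq_one_iff_adj.mpr ((hx w).mpr rfl), add_comm]
  · by_cases hr : G.Reachable x y
    · obtain ⟨q, hq⟩ := hr.exists_walk_length_eq_edist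
      cases q with
      | nil => exact absurd rfl hxy
      | cons hxz q =>
        obtain rfl := (hx _).mp hxz
        rw [← hq, Walk.length_cons, Nat.cast_succ]
        gcongr
        exact edist_le q
    · simp [edist_eq_top_of_not_reachable hr]

theorem edist_le_edist_add_one_of_adj {x y : V} (h : G.Adj x y) (v : V) :
    G.edist x v ≤ G.edist y v + 1 :=
  calc G.edist x v ≤ G.edist x y + G.edist y v := G.edist_triangle
    _ = G.edist y v + 1 := by rw [edist_eq_one_iff_adj.mpr h, add_comm]

theorem one_lt_edist_iff {u v : V} : 1 < G.edist u v ↔ u ≠ v ∧ ¬G.Adj u v := by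
  rw [← not_le, edist_le_one_iff_adj_or_eq]
  tauto

theorem pathGraph_edist {n : ℕ} (i j : Fin n) : (pathGraph n).edist i j = Nat.dist i j := by
  apply le_antisymm
  · wlog hij : i ≤ j generalizing i j
    · rw [edist_comm, Nat.dist_comm]
      exact this j i (le_of_not_ge hij)
    obtain ⟨d, hd⟩ := Nat.exists_eq_add_of_le (Fin.le_def.mp hij)
    induction d generalizing j with
    | zero => simp [Fin.ext hd.symm]
    | succ d ih =>
      set j' : Fin n := ⟨i + d, by omega⟩
      have hadj : (pathGraph n).Adj j' j := by rw [pathGraph_adj]; left; simp [j', hd, add_assoc]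
      calc (pathGraph n).edist i j ≤ (pathGraph n).edist i j' + (pathGraph n).edist j' j :=
            (pathGraph n).edist_triangle
        _ ≤ d + 1 := by
          gcongr
          · simpa [j', Nat.dist] using ih j' (Fin.le_def.mpr (by simp [j'])) rfl
          · exact (edist_eq_one_iff_adj.mpr hadj).le
        _ = Nat.dist i j := by simp [Nat.dist, hd]
  · have hφ : ∀ ⦃x y : Fin n⦄, (pathGraph n).Adj x y →
        (Nat.dist x j : ℕ∞) ≤ Nat.dist y j + 1 := by
      intro x y hxy
      rw [pathGraph_adj] at hxy
      norm_cast
      unfold Nat.dist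
      omega
    simpa using le_add_edist_of_adj_le_add_one hφ i j

end SimpleGraph

open SimpleGraph

section Corona

variable {V : Type*} {G : SimpleGraph V} {p : ℕ}

/-- The vertex in slot `r` of the star at `u`: its center for `r = none`, its `j`-th pendant
vertex for `r = some j`. -/
def coronaVertex (u : V) : Option (Fin p) → V ⊕ V × Fin p
  | none => .inl u
  | some j => .inr (u, j)

def coronaCenter : V ⊕ V × Fin p → V := Sum.elim id Prod.fst

def slotDepth : Option (Fin p) → ℕ
  | none => 0
  | some _ => 1

theorem exists_coronaVertex_eq : ∀ x : V ⊕ V × Fin p, ∃ u r, coronaVertex u r = x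
  | .inl u => ⟨u, none, rfl⟩
  | .inr (u, j) => ⟨u, some j, rfl⟩

theorem coronaVertex_inj {u v : V} {r s : Option (Fin p)} :
    coronaVertex u r = coronaVertex v s ↔ (u, r) = (v, s) := by
  cases r <;> cases s <;> simp [coronaVertex]

theorem genCorona_adj_inr_iff (u : V) (j : Fin p) (z : V ⊕ V × Fin p) :
    (genCorona G p).Adj (.inr (u, j)) z ↔ z = .inl u := by
  cases z <;> simp [genCorona, eq_comm]

theorem genCorona_adj_coronaCenter {x y : V ⊕ V × Fin p} (h : (genCorona G p).Adj x y) :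
    G.Adj (coronaCenter x) (coronaCenter y) ∨ coronaCenter x = coronaCenter y := by
  rcases h with ⟨u, v, rfl, rfl, h⟩ | ⟨u, j, rfl, rfl⟩ | ⟨u, j, rfl, rfl⟩
  · exact Or.inl h
  all_goals exact Or.inr rfl

theorem genCorona_edist_inl_inl (u v : V) :
    (genCorona G p).edist (.inl u) (.inl v) = G.edist u v := by
  apply le_antisymm
  · simpa using le_add_edist_of_adj_le_add_one
      (φ := fun w => (genCorona G p).edist (.inl w) (.inl v))
      (fun x y hxy => edist_le_edist_add_one_of_adj (Or.inl ⟨x, y, rfl, rfl, hxy⟩) _) u v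
  · have hφ : ∀ ⦃x y : V ⊕ V × Fin p⦄, (genCorona G p).Adj x y →
        G.edist (coronaCenter x) v ≤ G.edist (coronaCenter y) v + 1 := by
      intro x y hxy
      calc _ ≤ G.edist (coronaCenter x) (coronaCenter y) + _ := G.edist_triangle
        _ ≤ _ := by
          rw [add_comm]
          gcongr
          exact edist_le_one_iff_adj_or_eq.mpr (genCorona_adj_coronaCenter hxy)
    simpa [coronaCenter] using le_add_edist_of_adj_le_add_one hφ (.inl u) (.inl v)

theorem genCorona_edist_inr {u : V} {j : Fin p} {y : V ⊕ V × Fin p} (hy : .inr (u, j) ≠ y) :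
    (genCorona G p).edist (.inr (u, j)) y = (genCorona G p).edist (.inl u) y + 1 :=
  edist_eq_edist_add_one_of_adj_iff (genCorona_adj_inr_iff u j) hy

theorem genCorona_edist_coronaVertex {u v : V} {r s : Option (Fin p)} (h : (u, r) ≠ (v, s)) :
    (genCorona G p).edist (coronaVertex u r) (coronaVertex v s) =
      G.edist u v + slotDepth r + slotDepth s := by
  rcases r with _ | i <;> rcases s with _ | j
  · simp [coronaVertex, slotDepth, genCorona_edist_inl_inl]
  · rw [edist_comm, coronaVertex, coronaVertex, genCorona_edist_inr Sum.inr_ne_inl,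
      genCorona_edist_inl_inl, edist_comm]
    simp [slotDepth]
  · rw [coronaVertex, coronaVertex, genCorona_edist_inr Sum.inr_ne_inl, genCorona_edist_inl_inl]
    simp [slotDepth]
  · rw [coronaVertex, coronaVertex, genCorona_edist_inr (by simpa using h), edist_comm,
      genCorona_edist_inr Sum.inr_ne_inl, genCorona_edist_inl_inl, edist_comm]
    simp only [slotDepth, Nat.cast_one]

end Corona

section Packing

variable {V : Type*} {G : SimpleGraph V} {k : ℕ} {c : V → ℕ}

theorem IsPackingColoring.mono {k' : ℕ} (hc : IsPackingColoring G k c) (hk : k ≤ k') :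
    IsPackingColoring G k' c :=
  ⟨fun v => ⟨(hc.1 v).1, (hc.1 v).2.trans hk⟩, hc.2⟩

theorem IsPackingColoring.comp_of_edist_eq (hc : IsPackingColoring G k c) {φ : V → V}
    (hφ : ∀ x y, G.edist (φ x) (φ y) = G.edist x y) : IsPackingColoring G k (c ∘ φ) := by
  refine ⟨fun v => hc.1 (φ v), fun x y hxy hc' => ?_⟩
  rw [Function.comp_apply, ← hφ]
  refine hc.2 _ _ (fun h => hxy ?_) hc'
  rw [← edist_eq_zero_iff, ← hφ, h, edist_self]

theorem IsPackingColoring.of_eq_or_eq_one (hc : IsPackingColoring G k c) {c' : V → ℕ}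
    (hc' : ∀ x, c' x = c x ∨ c' x = 1) (hind : ∀ x y, G.Adj x y → c' x = 1 → c' y ≠ 1) :
    IsPackingColoring G k c' := by
  refine ⟨fun v => ?_, fun x y hxy hxy' => ?_⟩
  · rcases hc' v with h | h <;> have := hc.1 v <;> omega
  · by_cases h1 : c' x = 1
    · rw [h1, Nat.cast_one, one_lt_edist_iff]
      exact ⟨hxy, fun hadj => hind x y hadj h1 (hxy' ▸ h1)⟩
    · have hx := (hc' x).resolve_right h1
      have hy := (hc' y).resolve_right (hxy' ▸ h1)
      rw [hx] at hxy' ⊢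
      exact hc.2 x y hxy (hxy'.trans hy)

end Packing

section CoronaPacking

variable {V : Type*} {G : SimpleGraph V} {p k : ℕ} {c : V ⊕ V × Fin p → ℕ}

theorem isPackingColoring_genCorona_iff :
    IsPackingColoring (genCorona G p) k c ↔
      (∀ u r, 1 ≤ c (coronaVertex u r) ∧ c (coronaVertex u r) ≤ k) ∧
      ∀ u v r s, (u, r) ≠ (v, s) → c (coronaVertex u r) = c (coronaVertex v s) →
        (c (coronaVertex u r) : ℕ∞) < G.edist u v + slotDepth r + slotDepth s := by
  constructor
  · rintro ⟨hb, hc⟩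
    refine ⟨fun u r => hb _, fun u v r s hne heq => ?_⟩
    rw [← genCorona_edist_coronaVertex hne]
    exact hc _ _ (coronaVertex_inj.not.mpr hne) heq
  · rintro ⟨hb, hc⟩
    refine ⟨fun x => ?_, fun x y hxy heq => ?_⟩
    · obtain ⟨u, r, rfl⟩ := exists_coronaVertex_eq x
      exact hb u r
    · obtain ⟨u, r, rfl⟩ := exists_coronaVertex_eq x
      obtain ⟨v, s, rfl⟩ := exists_coronaVertex_eq y
      have hne := coronaVertex_inj.not.mp hxy
      rw [genCorona_edist_coronaVertex hne]
      exact hc u v r s hne heq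

def clearPendants (c : V ⊕ V × Fin p → ℕ) : V ⊕ V × Fin p → ℕ
  | .inl u => c (.inl u)
  | .inr (u, j) => if c (.inl u) = 1 then c (.inr (u, j)) else 1

def sortPendants (c : V ⊕ V × Fin p → ℕ) : V ⊕ V × Fin p → ℕ
  | .inl u => c (.inl u)
  | .inr (u, j) => c (.inr (u, Tuple.sort (fun i => c (.inr (u, i))) j))

theorem IsPackingColoring.clearPendants (hc : IsPackingColoring (genCorona G p) k c) :
    IsPackingColoring (genCorona G p) k (clearPendants c) := by
  refine hc.of_eq_or_eq_one (fun x => ?_) fun x y hxy hx hy => ?_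
  · rcases x with u | ⟨u, j⟩
    · exact Or.inl rfl
    · simp only [_root_.clearPendants]; split_ifs <;> simp
  · obtain ⟨hx1, hy1⟩ : c x = 1 ∧ c y = 1 := by
      rcases hxy with ⟨u, v, rfl, rfl, -⟩ | ⟨u, j, rfl, rfl⟩ | ⟨u, j, rfl, rfl⟩ <;>
        simp_all [_root_.clearPendants]
    have := hc.2 x y hxy.ne (hx1.trans hy1.symm)
    rw [hx1, Nat.cast_one, one_lt_edist_iff] at this
    exact this.2 hxy

def permutePendants (σ : V → Equiv.Perm (Fin p)) : V ⊕ V × Fin p → V ⊕ V × Fin p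
  | .inl u => .inl u
  | .inr (u, j) => .inr (u, σ u j)

theorem genCorona_edist_permutePendants (σ : V → Equiv.Perm (Fin p)) (x y : V ⊕ V × Fin p) :
    (genCorona G p).edist (permutePendants σ x) (permutePendants σ y) =
      (genCorona G p).edist x y := by
  have hφ : ∀ u r, permutePendants σ (coronaVertex u r) = coronaVertex u (r.map (σ u)) := by
    intro u r; cases r <;> rfl
  have hdepth : ∀ (f : Fin p → Fin p) r, slotDepth (r.map f) = slotDepth r := by
    intro f r; cases r <;> rfl
  obtain ⟨u, r, rfl⟩ := exists_coronaVertex_eq x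
  obtain ⟨v, s, rfl⟩ := exists_coronaVertex_eq y
  by_cases h : (u, r) = (v, s)
  · simp only [Prod.mk.injEq] at h
    obtain ⟨rfl, rfl⟩ := h
    simp only [edist_self]
  · have h' : (u, r.map (σ u)) ≠ (v, s.map (σ v)) := by
      intro h'
      simp only [Prod.mk.injEq] at h'
      obtain ⟨rfl, hrs⟩ := h'
      exact h (by rw [Option.map_injective (σ u).injective hrs])
    rw [hφ, hφ, genCorona_edist_coronaVertex h, genCorona_edist_coronaVertex h', hdepth, hdepth]

theorem IsPackingColoring.sortPendants (hc : IsPackingColoring (genCorona G p) k c) :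
    IsPackingColoring (genCorona G p) k (sortPendants c) := by
  have : _root_.sortPendants c =
      c ∘ permutePendants fun u => Tuple.sort fun i => c (.inr (u, i)) := by
    ext (u | ⟨u, j⟩) <;> rfl
  exact this ▸ hc.comp_of_edist_eq (genCorona_edist_permutePendants _)

def IsNormalStar (t : Option (Fin p) → ℕ) : Prop :=
  (t none ≠ 1 → ∀ j, t (some j) = 1) ∧ Monotone fun j => t (some j)

theorem IsPackingColoring.exists_isNormalStar (hc : IsPackingColoring (genCorona G p) k c) :
    ∃ c', IsPackingColoring (genCorona G p) k c' ∧
      ∀ u, IsNormalStar fun r => c' (coronaVertex u r) := by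
  refine ⟨_root_.sortPendants (_root_.clearPendants c), hc.clearPendants.sortPendants,
    fun u => ⟨fun hu j => ?_, Tuple.monotone_sort fun j => _root_.clearPendants c (.inr (u, j))⟩⟩
  simp_all [coronaVertex, _root_.sortPendants, _root_.clearPendants]

end CoronaPacking

section PathCorona

variable {p n k : ℕ} {S : ℕ → Option (Fin p) → ℕ}

/-- `S i r` is the color of slot `r` of the star at the `i`-th vertex of the path. -/
def IsPackingStarSeq (n k : ℕ) (S : ℕ → Option (Fin p) → ℕ) : Prop :=
  (∀ i < n, ∀ r, 1 ≤ S i r ∧ S i r ≤ k) ∧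
  ∀ i < n, ∀ j < n, ∀ r s, (i, r) ≠ (j, s) → S i r = S j s →
    S i r < Nat.dist i j + slotDepth r + slotDepth s

instance : Decidable (IsPackingStarSeq n k S) := by
  unfold IsPackingStarSeq; infer_instance

theorem isPackingColoring_genCorona_pathGraph_iff {c : Fin n ⊕ Fin n × Fin p → ℕ}
    (hcS : ∀ (i : Fin n) r, c (coronaVertex i r) = S i r) :
    IsPackingColoring (genCorona (pathGraph n) p) k c ↔ IsPackingStarSeq n k S := by
  rw [isPackingColoring_genCorona_iff, IsPackingStarSeq]
  simp only [hcS, pathGraph_edist, Fin.forall_iff, ne_eq, Prod.mk.injEq, Fin.ext_iff]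
  norm_cast

theorem IsPackingStarSeq.of_le {m : ℕ} (hS : IsPackingStarSeq n k S) (hmn : m ≤ n) :
    IsPackingStarSeq m k S :=
  ⟨fun i hi => hS.1 i (by omega), fun i hi j hj => hS.2 i (by omega) j (by omega)⟩

def StarsCompatible (d : ℕ) (s t : Option (Fin p) → ℕ) : Prop :=
  ∀ r r', s r = t r' → s r < d + slotDepth r + slotDepth r'

instance (d : ℕ) (s t : Option (Fin p) → ℕ) : Decidable (StarsCompatible d s t) := by
  unfold StarsCompatible; infer_instance

theorem IsPackingStarSeq.starsCompatible {i j : ℕ} (hS : IsPackingStarSeq n k S) (hji : j < i)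
    (hi : i < n) : StarsCompatible (i - j) (S i) (S j) := fun r r' h => by
  have := hS.2 i hi j (hji.trans hi) r r' (by simp [hji.ne']) h
  rwa [Nat.dist_comm, Nat.dist_eq_sub_of_le hji.le] at this

/-- Whether `s` is compatible with the stars of `ts`, the first of which is at distance `d`
from `s` and each of which is one step further away than its predecessor. -/
def compatibleWithAll (s : Option (Fin p) → ℕ) : ℕ → List (Option (Fin p) → ℕ) → Bool
  | _, [] => true
  | d, t :: ts => decide (StarsCompatible d s t) && compatibleWithAll s (d + 1) ts

/-- Depth-first search: can the stars `acc` (most recent first) be continued by `m` stars from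
`cands`, each compatible with all stars before it? -/
def canExtend (cands : List (Option (Fin p) → ℕ)) : ℕ → List (Option (Fin p) → ℕ) → Bool
  | 0, _ => true
  | m + 1, acc => cands.any fun s => compatibleWithAll s 1 acc && canExtend cands m (s :: acc)

theorem compatibleWithAll_eq_true {s : Option (Fin p) → ℕ} {d m : ℕ}
    (h : ∀ i < m, StarsCompatible (d + (m - 1 - i)) s (S i)) :
    compatibleWithAll s d ((List.range m).map S).reverse = true := by
  induction m generalizing d with
  | zero => rfl
  | succ m ih =>
    simp only [List.range_succ, List.map_append, List.reverse_append, List.map_cons,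
      List.map_nil, List.reverse_cons, List.reverse_nil, List.nil_append, List.singleton_append,
      compatibleWithAll, Bool.and_eq_true, decide_eq_true_eq]
    refine ⟨by simpa using h m (by omega), ih fun i hi => ?_⟩
    have := h i (by omega)
    rwa [show d + (m + 1 - 1 - i) = d + 1 + (m - 1 - i) by omega] at this

theorem canExtend_eq_true {cands : List (Option (Fin p) → ℕ)} (hmem : ∀ i < n, S i ∈ cands)
    (hS : ∀ i < n, ∀ j < i, StarsCompatible (i - j) (S i) (S j)) :
    canExtend cands n [] = true := by
  suffices ∀ m pos, pos + m = n → canExtend cands m ((List.range pos).map S).reverse = true from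
    this n 0 (by simp)
  intro m
  induction m with
  | zero => intro pos _; rfl
  | succ m ih =>
    intro pos hpos
    simp only [canExtend, List.any_eq_true, Bool.and_eq_true]
    refine ⟨S pos, hmem pos (by omega), compatibleWithAll_eq_true fun i hi => ?_, ?_⟩
    · convert hS pos (by omega) i hi using 2
      omega
    · simpa [List.range_succ] using ih (pos + 1) (by omega)

theorem isPackingStarSeq_of_periodic {q : ℕ} (hq : 0 < q) (hper : Function.Periodic S q)
    (hb : ∀ i < q, ∀ r, 1 ≤ S i r ∧ S i r ≤ k)
    (hloc : ∀ i < q, ∀ d ≤ k, ∀ r s, (i, r) ≠ (i + d, s) → S i r = S (i + d) s →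
      S i r < d + slotDepth r + slotDepth s) :
    IsPackingStarSeq n k S := by
  have hmod := hper.map_mod_nat
  have hb' : ∀ i r, 1 ≤ S i r ∧ S i r ≤ k := fun i r => hmod i ▸ hb _ (Nat.mod_lt _ hq) r
  suffices ∀ i j r s, (i, r) ≠ (j, s) → S i r = S j s →
      S i r < Nat.dist i j + slotDepth r + slotDepth s from
    ⟨fun i _ r => hb' i r, fun i _ j _ => this i j⟩
  intro i j r s hne heq
  wlog hij : i ≤ j generalizing i j r s
  · rw [heq, Nat.dist_comm, add_right_comm]
    exact this j i s r (Ne.symm hne) heq.symm (by omega)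
  obtain ⟨d, rfl⟩ := Nat.exists_eq_add_of_le hij
  rw [Nat.dist_eq_sub_of_le hij, Nat.add_sub_cancel_left]
  by_cases hd : d ≤ k
  · have hshift : S (i % q + d) = S (i + d) := by rw [← hmod (i % q + d), Nat.mod_add_mod, hmod]
    have := hloc (i % q) (Nat.mod_lt _ hq) d hd r s (by simpa using hne)
      (by rw [hmod, hshift, heq])
    rwa [hmod] at this
  · have := (hb' i r).2
    omega

end PathCorona

section ThreePendants

def centerStar (x : ℕ) : Option (Fin 3) → ℕ := fun r => r.elim x fun _ => 1

def pendantStar (a b c : ℕ) : Option (Fin 3) → ℕ := fun r => r.elim 1 ![a, b, c]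

def normalStars (k : ℕ) : List (Option (Fin 3) → ℕ) :=
  (List.range' 2 (k - 1)).map centerStar ++
  (List.range' 2 (k - 1)).flatMap fun a => (List.range' (a + 1) (k - a)).flatMap fun b =>
    (List.range' (b + 1) (k - b)).map (pendantStar a b)

theorem mem_normalStars {k : ℕ} {t : Option (Fin 3) → ℕ} (hb : ∀ r, 1 ≤ t r ∧ t r ≤ k)
    (hval : ∀ r r', r ≠ r' → t r = t r' → t r < slotDepth r + slotDepth r')
    (hn : IsNormalStar t) : t ∈ normalStars k := by
  have hb0 := hb none; have hb1 := hb (some 0); have hb2 := hb (some 1); have hb3 := hb (some 2)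
  by_cases h1 : t none = 1
  · have hcl : ∀ j, t (some j) ≠ 1 := fun j hj =>
      absurd (hval none (some j) (by simp) (h1.trans hj.symm)) (by simp [slotDepth, h1])
    have hlt : ∀ i j : Fin 3, i < j → t (some i) < t (some j) := fun i j hij =>
      lt_of_le_of_ne (hn.2 hij.le) fun h => hcl i (by
        have := hval (some i) (some j) (by simpa using hij.ne) h
        simp only [slotDepth] at this; have := hb (some i); omega)
    have h01 := hlt 0 1 (by decide); have h12 := hlt 1 2 (by decide)
    have h0 := hcl 0
    have ht : t = pendantStar (t (some 0)) (t (some 1)) (t (some 2)) := by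
      ext (_ | j)
      · exact h1
      · fin_cases j <;> rfl
    rw [ht]
    simp only [normalStars, List.mem_append, List.mem_map, List.mem_flatMap, List.mem_range'_1]
    exact Or.inr ⟨_, by omega, _, by omega, _, by omega, rfl⟩
  · have ht : t = centerStar (t none) := by
      ext (_ | j)
      · rfl
      · exact hn.1 h1 j
    rw [ht]
    simp only [normalStars, List.mem_append, List.mem_map, List.mem_range'_1]
    exact Or.inl ⟨_, by omega, rfl⟩

theorem not_isPackingColoring_of_canExtend_eq_false {n m k : ℕ} (hmn : m ≤ n)
    (hsearch : canExtend (normalStars k) m [] = false) (c : Fin n ⊕ Fin n × Fin 3 → ℕ) :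
    ¬IsPackingColoring (genCorona (pathGraph n) 3) k c := by
  intro hc
  obtain ⟨c', hc', hnorm⟩ := hc.exists_isNormalStar
  set S : ℕ → Option (Fin 3) → ℕ := fun i r => if h : i < n then c' (coronaVertex ⟨i, h⟩ r) else 1
  have hS : IsPackingStarSeq m k S :=
    ((isPackingColoring_genCorona_pathGraph_iff fun i r => by simp [S]).mp hc').of_le hmn
  have hmem : ∀ i < m, S i ∈ normalStars k := fun i hi =>
    mem_normalStars (hS.1 i hi)
      (fun r r' hrr' => by simpa using hS.2 i hi i hi r r' (by simpa using hrr'))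
      (by simpa [S, show i < n by omega] using hnorm ⟨i, by omega⟩)
  have := canExtend_eq_true hmem fun i hi j hj => hS.starsCompatible hj hi
  simp [hsearch] at this

end ThreePendants

theorem packingChromaticNumber_eq {V : Type*} {G : SimpleGraph V} {k : ℕ} {c : V → ℕ}
    (hc : IsPackingColoring G k c) (hk : ∀ c, ¬IsPackingColoring G (k - 1) c) :
    packingChromaticNumber G = k :=
  le_antisymm (Nat.sInf_le ⟨c, hc⟩) <| le_csInf ⟨k, c, hc⟩ fun k' ⟨c', hc'⟩ => by
    by_contra! h
    exact hk c' (hc'.mono (by omega))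

theorem packingChromaticNumber_genCorona_pathGraph_three_eq {n k m : ℕ}
    {S : ℕ → Option (Fin 3) → ℕ} (hS : IsPackingStarSeq n k S) (hmn : m ≤ n)
    (hsearch : canExtend (normalStars (k - 1)) m [] = false) :
    packingChromaticNumber (genCorona (pathGraph n) 3) = k :=
  packingChromaticNumber_eq
    ((isPackingColoring_genCorona_pathGraph_iff
      (c := Sum.elim (fun i => S i none) fun x => S x.1 (some x.2))
      fun i r => by cases r <;> rfl).mpr hS)
    (not_isPackingColoring_of_canExtend_eq_false hmn hsearch)

def shortPathStars (i : ℕ) : Option (Fin 3) → ℕ :=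
  centerStar ([2, 3, 4, 2, 5, 3, 2, 4].getD i 1)

def periodicStars (i : ℕ) : Option (Fin 3) → ℕ :=
  (pendantStar 2 3 4 :: [5, 2, 3, 4, 2, 6, 3, 2, 5, 4, 3, 2, 6].map centerStar).getD (i % 14) 0

theorem periodicStars_isPackingStarSeq {n : ℕ} : IsPackingStarSeq n 6 periodicStars :=
  isPackingStarSeq_of_periodic (q := 14) (by norm_num) (fun i => by simp [periodicStars])
    (by decide) (by decide)

theorem packing_chromatic_corona_path_three (n : ℕ) :
    (n = 1 → packingChromaticNumber (genCorona (pathGraph n) 3) = 2) ∧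
    (n = 2 → packingChromaticNumber (genCorona (pathGraph n) 3) = 3) ∧
    ((n = 3 ∨ n = 4) → packingChromaticNumber (genCorona (pathGraph n) 3) = 4) ∧
    ((5 ≤ n ∧ n ≤ 8) → packingChromaticNumber (genCorona (pathGraph n) 3) = 5) ∧
    (9 ≤ n → packingChromaticNumber (genCorona (pathGraph n) 3) = 6) := by
  have h8 : IsPackingStarSeq 8 5 shortPathStars := by decide
  refine ⟨?_, ?_, ?_, ?_, ?_⟩
  · rintro rfl
    exact packingChromaticNumber_genCorona_pathGraph_three_eq (S := shortPathStars) (by decide)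
      le_rfl (by decide)
  · rintro rfl
    exact packingChromaticNumber_genCorona_pathGraph_three_eq (S := shortPathStars) (by decide)
      le_rfl (by decide)
  · intro hn
    have h4 : IsPackingStarSeq 4 4 shortPathStars := by decide
    exact packingChromaticNumber_genCorona_pathGraph_three_eq (m := 3) (h4.of_le (by omega))
      (by omega) (by decide)
  · intro hn
    exact packingChromaticNumber_genCorona_pathGraph_three_eq (m := 5) (h8.of_le hn.2) hn.1
      (by decide)
  · intro hn
    exact packingChromaticNumber_genCorona_pathGraph_three_eq periodicStars_isPackingStarSeq hn
      (by decide)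
end

section
/- For every orientation P⃗_n of the path P_n (n ≥ 2), 2 ≤ χρ(P⃗_n) ≤ 3; moreover χρ(P⃗_n) = 2 if and only if one part of the bipartition of P_n contains only sources or sinks in P⃗_n. -/
open SimpleGraph

section AuxLemmas
/-! Adjacent vertices are at weak distance 1, so they get distinct colors, whence
`2 ≤ χρ`; on the path, weak distance dominates the index distance, so the periodic pattern
`1, 2, 1, 3` is always a packing 3-coloring. In a packing 2-coloring the vertices of color 1
form one part of the bipartition, and none of them can be the middle of a directed path
`a → v → b`, since `a` and `b` would both have color 2 at weak distance 2. Conversely, if one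
part consists of sources and sinks, no directed path of length 2 passes through it, so the two
vertices of color 2 flanking such a vertex are at weak distance at least 3. -/

section Digraph

variable {V : Type*} {A : V → V → Prop} {u v : V}

lemma wdist_le_of_dPath {m : ℕ} (h : DPath A m u v ∨ DPath A m v u) : wdist A u v ≤ m :=
  sInf_le ⟨m, rfl, h⟩

lemma le_wdist {d : ℕ} (h : ∀ m : ℕ, (DPath A m u v ∨ DPath A m v u) → d ≤ m) :
    (d : ℕ∞) ≤ wdist A u v := by
  refine le_sInf ?_
  rintro _ ⟨m, rfl, hm⟩
  exact_mod_cast h m hm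

lemma wdist_comm (A : V → V → Prop) (u v : V) : wdist A u v = wdist A v u := by
  unfold wdist
  simp only [or_comm]

lemma wdist_le_one_of_arc (h : A u v) : wdist A u v ≤ 1 := by
  exact_mod_cast wdist_le_of_dPath (m := 1) (Or.inl (show DPath A 1 u v from ⟨v, h, rfl⟩))

lemma not_isSource_or_isSink_of_arcs {a b : V} (ha : A a v) (hb : A v b) :
    ¬ (IsSource A v ∨ IsSink A v) := by
  rintro (hv | hv)
  exacts [hv a ha, hv b hb]

lemma dPackingChromaticNumber_le {k : ℕ} {c : V → ℕ} (hc : IsDPackingColoring A k c) :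
    dPackingChromaticNumber A ≤ k :=
  Nat.sInf_le ⟨c, hc⟩

lemma exists_isDPackingColoring_dPackingChromaticNumber {k : ℕ} {c : V → ℕ}
    (hc : IsDPackingColoring A k c) : ∃ c', IsDPackingColoring A (dPackingChromaticNumber A) c' :=
  Nat.sInf_mem (s := {k | ∃ c, IsDPackingColoring A k c}) ⟨k, c, hc⟩

end Digraph

namespace IsDPackingColoring

variable {V : Type*} {G : SimpleGraph V} {A : V → V → Prop} {k : ℕ} {c : V → ℕ}

lemma apply_ne_of_adj (hc : IsDPackingColoring A k c) (hA : IsOrientation G A) {u v : V}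
    (hadj : G.Adj u v) : c u ≠ c v := by
  intro heq
  have hlt : (c u : ℕ∞) < 1 := by
    refine (hc.2 u v hadj.ne heq).trans_le ?_
    rcases (hA.2 u v).mp hadj with h | h
    · exact wdist_le_one_of_arc h
    · exact wdist_comm A u v ▸ wdist_le_one_of_arc h
  have hone : (1 : ℕ∞) ≤ c u := by exact_mod_cast (hc.1 u).1
  exact hlt.not_ge hone

lemma two_le (hc : IsDPackingColoring A k c) (hA : IsOrientation G A) {u v : V}
    (hadj : G.Adj u v) : 2 ≤ k := by
  have := hc.apply_ne_of_adj hA hadj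
  have := hc.1 u
  have := hc.1 v
  omega

lemma isSource_or_isSink (hc : IsDPackingColoring A 2 c) (hA : IsOrientation G A) {v : V}
    (hv : c v = 1) : IsSource A v ∨ IsSink A v := by
  by_contra hvs
  obtain ⟨a, ha⟩ : ∃ a, A a v := by simpa [IsSource] using (not_or.mp hvs).1
  obtain ⟨b, hb⟩ : ∃ b, A v b := by simpa [IsSink] using (not_or.mp hvs).2
  have hab : a ≠ b := by
    rintro rfl
    exact hA.1 a v ha hb
  have hca := hc.apply_ne_of_adj hA ((hA.2 a v).mpr (Or.inl ha))
  have hcb := hc.apply_ne_of_adj hA ((hA.2 v b).mpr (Or.inl hb))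
  have := hc.1 a
  have := hc.1 b
  have hlt : ((2 : ℕ) : ℕ∞) < wdist A a b := by
    convert hc.2 a b hab (by omega) using 2
    omega
  have hle : wdist A a b ≤ (2 : ℕ) :=
    wdist_le_of_dPath (Or.inl (show DPath A 2 a b from ⟨v, ha, b, hb, rfl⟩))
  exact hle.not_gt hlt

lemma exists_bipartition (hc : IsDPackingColoring A 2 c) (hA : IsOrientation G A) :
    ∃ s : Set V, (∀ u v : V, G.Adj u v → (u ∈ s ↔ v ∉ s)) ∧
      ∀ v ∈ s, IsSource A v ∨ IsSink A v := by
  refine ⟨{v | c v = 1}, fun u v hadj => ?_, fun v hv => hc.isSource_or_isSink hA hv⟩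
  have := hc.apply_ne_of_adj hA hadj
  have := hc.1 u
  have := hc.1 v
  simp only [Set.mem_ofPred_eq]
  omega

end IsDPackingColoring

namespace IsOrientation

variable {n : ℕ} {A : Fin n → Fin n → Prop}

lemma val_add_one_eq_or (hA : IsOrientation (pathGraph n) A) {u v : Fin n} (h : A u v) :
    (u : ℕ) + 1 = v ∨ (v : ℕ) + 1 = u :=
  pathGraph_adj.mp ((hA.2 u v).mpr (Or.inl h))

lemma le_add_of_dPath (hA : IsOrientation (pathGraph n) A) :
    ∀ {m : ℕ} {u v : Fin n}, DPath A m u v → (u : ℕ) ≤ v + m ∧ (v : ℕ) ≤ u + m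
  | 0, _, _, rfl => by omega
  | _ + 1, _, _, ⟨_, huw, hwv⟩ => by
    have := hA.val_add_one_eq_or huw
    have := hA.le_add_of_dPath hwv
    omega

lemma le_wdist_of_add_le (hA : IsOrientation (pathGraph n) A) {u v : Fin n} {d : ℕ}
    (hd : d + (v : ℕ) ≤ u ∨ d + (u : ℕ) ≤ v) : (d : ℕ∞) ≤ wdist A u v := by
  refine le_wdist fun m hm => ?_
  rcases hm with h | h
  · have := hA.le_add_of_dPath h; omega
  · have := hA.le_add_of_dPath h; omega

/-- The only directed paths of length 2 from `u` to `u + 2` or back pass through `u + 1`. -/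
lemma three_le_wdist (hA : IsOrientation (pathGraph n) A) {u v w : Fin n}
    (huw : (u : ℕ) + 1 = w) (hwv : (w : ℕ) + 1 = v) (hw : IsSource A w ∨ IsSink A w) :
    3 ≤ wdist A u v := by
  suffices ((3 : ℕ) : ℕ∞) ≤ wdist A u v by exact_mod_cast this
  refine le_wdist fun m hm => ?_
  have h2 : 2 ≤ m := by
    rcases hm with h | h
    · have := hA.le_add_of_dPath h; omega
    · have := hA.le_add_of_dPath h; omega
  by_contra hm3
  obtain rfl : m = 2 := by omega
  rcases hm with ⟨x, h1, y, h2, rfl⟩ | ⟨x, h1, y, h2, rfl⟩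
  all_goals
    have := hA.val_add_one_eq_or h1
    have := hA.val_add_one_eq_or h2
    obtain rfl : x = w := Fin.ext (by omega)
    exact not_isSource_or_isSink_of_arcs h1 h2 hw

lemma isDPackingColoring_of_add_le (hA : IsOrientation (pathGraph n) A) {k : ℕ}
    {c : Fin n → ℕ} (hk : ∀ v, 1 ≤ c v ∧ c v ≤ k)
    (hgap : ∀ u v : Fin n, u ≠ v → c u = c v → c u + 1 + v ≤ u ∨ c u + 1 + u ≤ v) :
    IsDPackingColoring A k c := by
  refine ⟨hk, fun u v huv hc => ?_⟩
  refine lt_of_lt_of_le ?_ (hA.le_wdist_of_add_le (hgap u v huv hc))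
  exact_mod_cast Nat.lt_succ_self _

lemma exists_isDPackingColoring_three (hA : IsOrientation (pathGraph n) A) :
    ∃ c, IsDPackingColoring A 3 c := by
  refine ⟨fun i => if (i : ℕ) % 4 = 1 then 2 else if (i : ℕ) % 4 = 3 then 3 else 1,
    hA.isDPackingColoring_of_add_le (fun v => ?_) fun u v huv hc => ?_⟩
  · split_ifs <;> omega
  · have := Fin.val_ne_of_ne huv
    split_ifs at hc ⊢ <;> omega

lemma exists_isDPackingColoring_two (hA : IsOrientation (pathGraph n) A) {s : Set (Fin n)}
    (hs : ∀ u v : Fin n, (pathGraph n).Adj u v → (u ∈ s ↔ v ∉ s))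
    (hsrc : ∀ v ∈ s, IsSource A v ∨ IsSink A v) : ∃ c, IsDPackingColoring A 2 c := by
  classical
  refine ⟨fun v => if v ∈ s then 1 else 2, fun v => ?_, fun u v huv hc => ?_⟩
  · dsimp only
    split_ifs <;> omega
  have hne := Fin.val_ne_of_ne huv
  by_cases hu : u ∈ s <;> by_cases hv : v ∈ s <;>
    simp only [hu, hv, ite_true, ite_false] at hc ⊢
  · have hnadj : ¬ (pathGraph n).Adj u v := fun hadj => (hs u v hadj).mp hu hv
    rw [pathGraph_adj] at hnadj
    exact lt_of_lt_of_le (by norm_num) (hA.le_wdist_of_add_le (d := 2) (by omega))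
  · omega
  · omega
  · have hnadj : ¬ (pathGraph n).Adj u v := fun hadj => hu ((hs u v hadj).mpr hv)
    rw [pathGraph_adj] at hnadj
    suffices 3 ≤ wdist A u v from lt_of_lt_of_le (by norm_num) this
    have three_le_of_notMem :
        ∀ {a b : Fin n}, a ∉ s → (a : ℕ) + 1 < b → 3 ≤ wdist A a b := by
      intro a b ha hab
      rcases (show (a : ℕ) + 2 = b ∨ (a : ℕ) + 3 ≤ b by omega) with h | h
      · let w : Fin n := ⟨a + 1, by omega⟩
        have haw : (pathGraph n).Adj a w := pathGraph_adj.mpr (Or.inl rfl)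
        exact hA.three_le_wdist (w := w) rfl (by simp only [w]; omega)
          (hsrc w (by simpa [ha] using hs a w haw))
      · exact_mod_cast hA.le_wdist_of_add_le (d := 3) (by omega)
    rcases Nat.lt_or_gt_of_ne hne with h | h
    · exact three_le_of_notMem hu (by omega)
    · exact wdist_comm A u v ▸ three_le_of_notMem hv (by omega)

end IsOrientation

theorem dpacking_oriented_path (n : ℕ) (hn : 2 ≤ n) (A : Fin n → Fin n → Prop)
    (hA : IsOrientation (pathGraph n) A) :
    2 ≤ dPackingChromaticNumber A ∧ dPackingChromaticNumber A ≤ 3 ∧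
    (dPackingChromaticNumber A = 2 ↔
      ∃ s : Set (Fin n), (∀ u v : Fin n, (pathGraph n).Adj u v → (u ∈ s ↔ v ∉ s)) ∧
        ∀ v ∈ s, IsSource A v ∨ IsSink A v) := by
  obtain ⟨c₃, hc₃⟩ := hA.exists_isDPackingColoring_three
  obtain ⟨c, hc⟩ := exists_isDPackingColoring_dPackingChromaticNumber hc₃
  have hadj : (pathGraph n).Adj ⟨0, by omega⟩ ⟨1, by omega⟩ :=
    pathGraph_adj.mpr (Or.inl rfl)
  have hlower : 2 ≤ dPackingChromaticNumber A := hc.two_le hA hadj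
  refine ⟨hlower, dPackingChromaticNumber_le hc₃, fun h2 => ?_, fun ⟨s, hs, hsrc⟩ => ?_⟩
  · exact (h2 ▸ hc).exists_bipartition hA
  · obtain ⟨c₂, hc₂⟩ := hA.exists_isDPackingColoring_two hs hsrc
    exact le_antisymm (dPackingChromaticNumber_le hc₂) hlower
end AuxLemmas
end
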